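/- arXiv:2310.06092 — 4 statements merged into one kernel-verified Lean document; each statement's English description precedes it below -/
import Mathlib

section
/- Let L : [0, L₀] × [−β₀, β₀] → ℝ be ℓ₀-Lipschitz in both variables, and extend L(s, ·) = +∞ outside [−β₀, β₀]. Define on a uniform grid the value-iteration operator (S v)(s) = min over α ∈ [−β₀, β₀] with s − Δt·α ∈ [0, L₀] of ( I[v](s − Δt·α) + Δt·L(s, α) ), where I[v] is piecewise linear interpolation of grid values of v. If v is ℓ-Lipschitz on the grid, then S v is (ℓ + Δt·ℓ₀)-Lipschitz on the grid. -/
set_option maxHeartbeats 1000000 in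
/-- one-step Lipschitz propagation for the semi-Lagrangian
value-iteration operator: if the grid values `v` are `ℓ`-Lipschitz, then the
updated grid values `Sv` are `(ℓ + Δt·ℓ₀)`-Lipschitz on the grid. -/
theorem value_iteration_lipschitz_propagation
    (L₀ β₀ Δx Δt ℓ ℓ₀ : ℝ)
    (hL₀ : 0 < L₀) (hβ₀ : 0 < β₀) (hΔx : 0 < Δx) (hΔt : 0 < Δt)
    (hadm : Δx ≤ Δt) (hℓ₀ : 0 ≤ ℓ₀) (hℓ : ℓ₀ ≤ ℓ)
    (N : ℕ) (hN : 0 < N)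
    (s : Fin (N + 1) → ℝ)
    (hs : ∀ i : Fin (N + 1), (i : ℕ) < N → s i = (i : ℕ) * Δx)
    (hsN : s (Fin.last N) = L₀) (hmono : StrictMono s)
    (Lag : ℝ → ℝ → ℝ)
    (hLag : ∀ s₁ ∈ Set.Icc (0:ℝ) L₀, ∀ s₂ ∈ Set.Icc (0:ℝ) L₀,
      ∀ α₁ ∈ Set.Icc (-β₀) β₀, ∀ α₂ ∈ Set.Icc (-β₀) β₀,
      |Lag s₁ α₁ - Lag s₂ α₂| ≤ ℓ₀ * (|s₁ - s₂| + |α₁ - α₂|))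
    (v : Fin (N + 1) → ℝ)
    (hvLip : ∀ i j : Fin (N + 1), |v i - v j| ≤ ℓ * |s i - s j|)
    (Iv : ℝ → ℝ)
    (hIv : ∀ i : Fin N, ∀ x ∈ Set.Icc (s i.castSucc) (s i.succ),
      Iv x = v i.castSucc
        + ((x - s i.castSucc) / (s i.succ - s i.castSucc)) * (v i.succ - v i.castSucc))
    (Sv : Fin (N + 1) → ℝ)
    (hSv : ∀ i : Fin (N + 1), IsLeast
      {y : ℝ | ∃ α ∈ Set.Icc (-β₀) β₀, s i - Δt * α ∈ Set.Icc (0:ℝ) L₀ ∧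
        y = Iv (s i - Δt * α) + Δt * Lag (s i) α} (Sv i)) :
    ∀ i j : Fin (N + 1), |Sv i - Sv j| ≤ (ℓ + Δt * ℓ₀) * |s i - s j| := by
  have hℓnn : (0:ℝ) ≤ ℓ := le_trans hℓ₀ hℓ
  have hs0 : s 0 = 0 := by
    have h := hs 0 (by simpa using hN)
    simpa using h
  have hrange : ∀ i : Fin (N + 1), s i ∈ Set.Icc (0:ℝ) L₀ := by
    intro i
    constructor
    · rw [← hs0]; exact hmono.monotone (Fin.zero_le i)
    · rw [← hsN]; exact hmono.monotone (Fin.le_last i)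
  -- every point of [0, L₀] lies in some grid cell
  have hcell : ∀ x ∈ Set.Icc (0:ℝ) L₀, ∃ a : Fin N,
      s a.castSucc ≤ x ∧ x ≤ s a.succ := by
    intro x hx
    classical
    set T : Finset (Fin (N + 1)) := Finset.univ.filter (fun i => s i ≤ x) with hT
    have h0T : (0 : Fin (N + 1)) ∈ T := by
      simp only [hT, Finset.mem_filter, Finset.mem_univ, true_and, hs0]
      exact hx.1
    have hne : T.Nonempty := ⟨0, h0T⟩
    set m := T.max' hne with hm
    have hmT : m ∈ T := T.max'_mem hne
    have hsm : s m ≤ x := by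
      simpa only [hT, Finset.mem_filter, Finset.mem_univ, true_and] using hmT
    rcases lt_or_ge (m : ℕ) N with hlt | hge
    · refine ⟨⟨(m : ℕ), hlt⟩, ?_, ?_⟩
      · have hcs : (⟨(m : ℕ), hlt⟩ : Fin N).castSucc = m := by
          ext; simp
        rw [hcs]; exact hsm
      · by_contra hcon
        push_neg at hcon
        have hmem : (⟨(m : ℕ), hlt⟩ : Fin N).succ ∈ T := by
          simp only [hT, Finset.mem_filter, Finset.mem_univ, true_and]
          exact hcon.le
        have hle := T.le_max' _ hmem
        rw [← hm] at hle
        have hle' : ((⟨(m : ℕ), hlt⟩ : Fin N).succ : ℕ) ≤ (m : ℕ) := hle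
        simp only [Fin.val_succ] at hle'
        omega
    · have hml : m = Fin.last N := by
        ext
        have : (m : ℕ) < N + 1 := m.isLt
        simp only [Fin.val_last]
        omega
      have hxeq : x = s (Fin.last N) := by
        refine le_antisymm ?_ ?_
        · rw [hsN]; exact hx.2
        · rw [← hml]; exact hsm
      refine ⟨⟨N - 1, by omega⟩, ?_, ?_⟩
      · exact le_of_le_of_eq (hmono.monotone (Fin.le_last _)) hxeq.symm
      · have hsucc : (⟨N - 1, by omega⟩ : Fin N).succ = Fin.last N := by
          ext; simp only [Fin.val_succ, Fin.val_last]; omega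
        rw [hsucc, ← hxeq]
  -- key one-cell estimate
  have hkey : ∀ (a : Fin N) (x : ℝ), s a.castSucc ≤ x → x ≤ s a.succ →
      ∀ (z w : ℝ), |v a.castSucc - w| ≤ ℓ * |s a.castSucc - z| →
      |v a.succ - w| ≤ ℓ * |s a.succ - z| →
      (z ≤ s a.castSucc ∨ s a.succ ≤ z) → |Iv x - w| ≤ ℓ * |x - z| := by
    intro a x hx1 hx2 z w h1 h2 hz
    have hAB : s a.castSucc < s a.succ := hmono (Fin.castSucc_lt_succ : a.castSucc < a.succ)
    have hh : (0:ℝ) < s a.succ - s a.castSucc := sub_pos.2 hAB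
    set sA := s a.castSucc with hsA
    set sB := s a.succ with hsB
    set vA := v a.castSucc with hvA
    set vB := v a.succ with hvB
    set t := (x - sA) / (sB - sA) with htdef
    have ht0 : 0 ≤ t := div_nonneg (by linarith) hh.le
    have ht1 : t ≤ 1 := (div_le_one hh).2 (by linarith)
    have htA : x - sA = t * (sB - sA) := by
      rw [htdef]; field_simp
    have hform : Iv x = vA + t * (vB - vA) := hIv a x ⟨hx1, hx2⟩
    have hkeyeq : (1 - t) * |sA - z| + t * |sB - z| = |x - z| := by
      rcases hz with hz | hz
      · rw [abs_of_nonneg (by linarith : (0:ℝ) ≤ sA - z),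
          abs_of_nonneg (by linarith : (0:ℝ) ≤ sB - z),
          abs_of_nonneg (by linarith : (0:ℝ) ≤ x - z)]
        linear_combination -htA
      · rw [abs_of_nonpos (by linarith : sA - z ≤ 0),
          abs_of_nonpos (by linarith : sB - z ≤ 0),
          abs_of_nonpos (by linarith : x - z ≤ 0)]
        linear_combination htA
    calc |Iv x - w| = |(1 - t) * (vA - w) + t * (vB - w)| := by
          rw [hform]; congr 1; ring
      _ ≤ (1 - t) * |vA - w| + t * |vB - w| := by
          refine (abs_add_le _ _).trans ?_
          rw [abs_mul, abs_mul, abs_of_nonneg (by linarith : (0:ℝ) ≤ 1 - t),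
            abs_of_nonneg ht0]
      _ ≤ (1 - t) * (ℓ * |sA - z|) + t * (ℓ * |sB - z|) := by
          exact add_le_add (mul_le_mul_of_nonneg_left h1 (by linarith))
            (mul_le_mul_of_nonneg_left h2 ht0)
      _ = ℓ * ((1 - t) * |sA - z| + t * |sB - z|) := by ring
      _ = ℓ * |x - z| := by rw [hkeyeq]
  -- interpolation is Lipschitz w.r.t. grid points
  have hA : ∀ i : Fin (N + 1), ∀ x ∈ Set.Icc (0:ℝ) L₀,
      |Iv x - v i| ≤ ℓ * |x - s i| := by
    intro i x hx
    obtain ⟨a, hx1, hx2⟩ := hcell x hx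
    refine hkey a x hx1 hx2 (s i) (v i) (hvLip _ _) (hvLip _ _) ?_
    rcases le_or_gt (i : ℕ) (a : ℕ) with hc | hc
    · refine Or.inl (hmono.monotone ?_)
      rw [Fin.le_def]; simpa using hc
    · refine Or.inr (hmono.monotone ?_)
      rw [Fin.le_def, Fin.val_succ]; omega
  -- interpolation is Lipschitz
  have hB : ∀ x ∈ Set.Icc (0:ℝ) L₀, ∀ y ∈ Set.Icc (0:ℝ) L₀,
      |Iv x - Iv y| ≤ ℓ * |x - y| := by
    intro x hx y hy
    obtain ⟨a, hx1, hx2⟩ := hcell x hx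
    have hAB : s a.castSucc < s a.succ := hmono (Fin.castSucc_lt_succ : a.castSucc < a.succ)
    have hh : (0:ℝ) < s a.succ - s a.castSucc := sub_pos.2 hAB
    rcases le_or_gt y (s a.castSucc) with hyA | hyA
    · refine hkey a x hx1 hx2 y (Iv y) ?_ ?_ (Or.inl hyA)
      · rw [abs_sub_comm (v a.castSucc) (Iv y), abs_sub_comm (s a.castSucc) y]
        exact hA _ y hy
      · rw [abs_sub_comm (v a.succ) (Iv y), abs_sub_comm (s a.succ) y]
        exact hA _ y hy
    · rcases le_or_gt (s a.succ) y with hyB | hyB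
      · refine hkey a x hx1 hx2 y (Iv y) ?_ ?_ (Or.inr hyB)
        · rw [abs_sub_comm (v a.castSucc) (Iv y), abs_sub_comm (s a.castSucc) y]
          exact hA _ y hy
        · rw [abs_sub_comm (v a.succ) (Iv y), abs_sub_comm (s a.succ) y]
          exact hA _ y hy
      · have hformx := hIv a x ⟨hx1, hx2⟩
        have hformy := hIv a y ⟨hyA.le, hyB.le⟩
        have hdiff : Iv x - Iv y
            = ((x - y) / (s a.succ - s a.castSucc)) * (v a.succ - v a.castSucc) := by
          rw [hformx, hformy]; field_simp; ring
        have hv : |v a.succ - v a.castSucc| ≤ ℓ * (s a.succ - s a.castSucc) := by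
          have h := hvLip a.succ a.castSucc
          rwa [abs_of_pos hh] at h
        rw [hdiff, abs_mul, abs_div, abs_of_pos hh, div_mul_eq_mul_div, div_le_iff₀ hh]
        nlinarith [mul_le_mul_of_nonneg_left hv (abs_nonneg (x - y)), abs_nonneg (x - y)]
  -- clamping helper
  have hclamp : ∀ a b : ℝ, b ≤ a →
      max 0 (min L₀ b) ≤ max 0 (min L₀ a) ∧
      max 0 (min L₀ a) - max 0 (min L₀ b) ≤ a - b := by
    intro a b hab
    refine ⟨max_le_max le_rfl (min_le_min le_rfl hab), ?_⟩
    rcases le_total (min L₀ a) 0 with h | h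
    · rw [max_eq_left h]
      have h0b : (0:ℝ) ≤ max 0 (min L₀ b) := le_max_left _ _
      linarith
    · rw [max_eq_right h]
      have h2 : min L₀ b ≤ max 0 (min L₀ b) := le_max_right _ _
      have h3 : min L₀ a - min L₀ b ≤ a - b := by
        rcases le_total a L₀ with ha | ha <;> rcases le_total b L₀ with hb' | hb'
        · rw [min_eq_right ha, min_eq_right hb']
        · rw [min_eq_right ha, min_eq_left hb']; linarith
        · rw [min_eq_left ha, min_eq_right hb']; linarith
        · rw [min_eq_left ha, min_eq_left hb']; linarith
      linarith
  -- one-sided estimate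
  have main : ∀ i j : Fin (N + 1), Sv i - Sv j ≤ (ℓ + Δt * ℓ₀) * |s i - s j| := by
    intro i j
    have hmemj := (hSv j).1
    simp only [Set.mem_setOf_eq] at hmemj
    obtain ⟨α, hα, hxj, hSvj⟩ := hmemj
    have hΔt' : Δt ≠ 0 := hΔt.ne'
    have hi0 : (0:ℝ) ≤ s i := (hrange i).1
    have hiL : s i ≤ L₀ := (hrange i).2
    set xj := s j - Δt * α with hxjdef
    set u := s i - Δt * α with hudef
    set xi := max 0 (min L₀ u) with hxidef
    set αi := (s i - xi) / Δt with hαidef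
    have hxi : xi ∈ Set.Icc (0:ℝ) L₀ :=
      ⟨le_max_left _ _, max_le hL₀.le (min_le_left _ _)⟩
    have hfoot : s i - Δt * αi = xi := by
      rw [hαidef]; field_simp; ring
    have hβΔ : (0:ℝ) ≤ Δt * β₀ := by positivity
    have hxi_lb : s i - Δt * β₀ ≤ xi := by
      refine le_trans (le_min (by linarith) ?_) (le_max_right _ _)
      have hα1 : α ≤ β₀ := hα.2
      rw [hudef]; nlinarith
    have hxi_ub : xi ≤ s i + Δt * β₀ := by
      refine max_le (by linarith) ?_
      refine (min_le_right _ _).trans ?_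
      have hα2 : -β₀ ≤ α := hα.1
      rw [hudef]; nlinarith
    have hαi : αi ∈ Set.Icc (-β₀) β₀ := by
      constructor
      · rw [hαidef, le_div_iff₀ hΔt]; nlinarith
      · rw [hαidef, div_le_iff₀ hΔt]; nlinarith
    have hub : Sv i ≤ Iv xi + Δt * Lag (s i) αi := by
      refine (hSv i).2 ?_
      simp only [Set.mem_setOf_eq]
      exact ⟨αi, hαi, by rw [hfoot]; exact hxi, by rw [hfoot]⟩
    have hxjclamp : xj = max 0 (min L₀ xj) := by
      rw [min_eq_right hxj.2, max_eq_right hxj.1]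
    -- sandwich for E = xi - xj relative to D = s i - s j
    have hEsand : (0 ≤ xi - xj ∧ xi - xj ≤ s i - s j)
        ∨ (s i - s j ≤ xi - xj ∧ xi - xj ≤ 0) := by
      rcases le_total (s j) (s i) with hij | hij
      · left
        have hc := hclamp u xj (by rw [hudef, hxjdef]; linarith)
        rw [← hxidef, ← hxjclamp] at hc
        constructor
        · linarith [hc.1]
        · have := hc.2
          rw [hudef, hxjdef] at this
          linarith
      · right
        have hc := hclamp xj u (by rw [hudef, hxjdef]; linarith)
        rw [← hxidef, ← hxjclamp] at hc
        constructor
        · have := hc.2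
          rw [hudef, hxjdef] at this
          linarith
        · linarith [hc.1]
    have hLag1 : |Lag (s i) αi - Lag (s j) α| ≤ ℓ₀ * (|s i - s j| + |αi - α|) :=
      hLag _ (hrange i) _ (hrange j) _ hαi _ hα
    have hIvd : |Iv xi - Iv xj| ≤ ℓ * |xi - xj| := hB _ hxi _ hxj
    have hαd : Δt * (αi - α) = (s i - s j) - (xi - xj) := by
      have h1 : Δt * αi = s i - xi := by linarith [hfoot]
      have h2 : Δt * α = s j - xj := by rw [hxjdef]; ring
      rw [mul_sub, h1, h2]; ring
    have habs : Δt * |αi - α| = |(s i - s j) - (xi - xj)| := by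
      rw [← hαd, abs_mul, abs_of_pos hΔt]
    have hstep : Sv i - Sv j ≤ ℓ * |xi - xj| + Δt * (ℓ₀ * (|s i - s j| + |αi - α|)) := by
      have h1 : Iv xi - Iv xj ≤ ℓ * |xi - xj| := (le_abs_self _).trans hIvd
      have h2 : Lag (s i) αi - Lag (s j) α ≤ ℓ₀ * (|s i - s j| + |αi - α|) :=
        (le_abs_self _).trans hLag1
      have h3 := mul_le_mul_of_nonneg_left h2 hΔt.le
      rw [hSvj]
      linarith
    rcases hEsand with ⟨h1, h2⟩ | ⟨h1, h2⟩
    · have hD0 : (0:ℝ) ≤ s i - s j := le_trans h1 h2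
      have hα' : Δt * |αi - α| = (s i - s j) - (xi - xj) := by
        rw [habs, abs_of_nonneg (by linarith)]
      have e1 : ℓ₀ * (Δt * |αi - α|) = ℓ₀ * ((s i - s j) - (xi - xj)) := by rw [hα']
      rw [abs_of_nonneg hD0]
      rw [abs_of_nonneg hD0, abs_of_nonneg h1] at hstep
      nlinarith [mul_nonneg (sub_nonneg.2 hℓ) (sub_nonneg.2 h2)]
    · have hD0 : s i - s j ≤ 0 := le_trans h1 h2
      have hα' : Δt * |αi - α| = (xi - xj) - (s i - s j) := by
        rw [habs, abs_of_nonpos (by linarith)]; ring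
      have e1 : ℓ₀ * (Δt * |αi - α|) = ℓ₀ * ((xi - xj) - (s i - s j)) := by rw [hα']
      rw [abs_of_nonpos hD0]
      rw [abs_of_nonpos hD0, abs_of_nonpos h2] at hstep
      nlinarith [mul_nonneg (sub_nonneg.2 hℓ) (sub_nonneg.2 h1)]
  intro i j
  rw [abs_sub_le_iff]
  constructor
  · exact main i j
  · rw [abs_sub_comm]
    exact main j i
end

section
/- Let L : [0,|γ|] × ℝ → ℝ ∪ {+∞} be a Lagrangian with L(s, α) = +∞ for |α| > β₀ and L continuous on [0,|γ|] × [−β₀, β₀]. Let ψ : (0,|γ|) × (0,T) → ℝ be C¹, and H(s, μ) = max_{|α| ≤ β₀}(αμ − L(s, α)). Then for s ∈ (0,|γ|), t ∈ (0,T), and sequences (s_m, t_m) → (s, t) with Δ_m t → 0, Δ_m x/Δ_m t bounded, the quantity (1/Δ_m t)·[ min_{α : s_m − Δ_m t·α ∈ [0,|γ|]} ( ψ(s_m − Δ_m t·α, t_m) + Δ_m t·L(s_m, α) ) − ψ(s_m, t_m) ] converges to −H(s, ψ'(s, t)), where ψ' denotes the spatial derivative. -/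
private lemma csInf_image_le_of_pointwise {K : Set ℝ} (hK : K.Nonempty)
    {f h : ℝ → ℝ} {ε : ℝ}
    (hbf : BddBelow (f '' K)) (hfh : ∀ x ∈ K, f x ≤ h x + ε) :
    sInf (f '' K) ≤ sInf (h '' K) + ε := by
  have h2 : sInf (f '' K) - ε ≤ sInf (h '' K) := by
    apply le_csInf (hK.image h)
    rintro y ⟨x, hx, rfl⟩
    have h1 : sInf (f '' K) ≤ f x := csInf_le hbf ⟨x, hx, rfl⟩
    linarith [hfh x hx]
  linarith

private lemma sInf_neg_image (f : ℝ → ℝ) (K : Set ℝ) :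
    sInf ((fun x => - f x) '' K) = -sSup (f '' K) := by
  have h : -((fun x => - f x) '' K) = f '' K := by
    ext y
    simp only [Set.mem_neg, Set.mem_image]
    constructor
    · rintro ⟨x, hx, h⟩; exact ⟨x, hx, by linarith⟩
    · rintro ⟨x, hx, h⟩; exact ⟨x, hx, by linarith⟩
  rw [Real.sInf_def, h]

set_option maxHeartbeats 1000000 in
/-- semi-Lagrangian consistency (exact evaluation): the rescaled
scheme residual converges to `-H(s, ψ'(s,t))`, where `H(s,·)` is the Fenchel
conjugate of the Lagrangian `Lag(s,·)` restricted to `[-β₀, β₀]` (the Lagrangian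
being `+∞` outside `[-β₀, β₀]`, the minimization is over `[-β₀, β₀]` together
with the feasibility constraint). -/
theorem semi_lagrangian_consistency
    (Lγ T β₀ : ℝ) (hLγ : 0 < Lγ) (hT : 0 < T) (hβ₀ : 0 < β₀)
    (Lag : ℝ → ℝ → ℝ)
    (hLag : ContinuousOn (fun p : ℝ × ℝ => Lag p.1 p.2)
      (Set.Icc 0 Lγ ×ˢ Set.Icc (-β₀) β₀))
    (ψ : ℝ → ℝ → ℝ)
    (hψ : ContDiffOn ℝ 1 (fun p : ℝ × ℝ => ψ p.1 p.2)
      (Set.Ioo 0 Lγ ×ˢ Set.Ioo 0 T))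
    (s t : ℝ) (hs : s ∈ Set.Ioo (0 : ℝ) Lγ) (ht : t ∈ Set.Ioo (0 : ℝ) T)
    (sm tm Δx Δt : ℕ → ℝ)
    (hsm_mem : ∀ m, sm m ∈ Set.Icc (0 : ℝ) Lγ)
    (hsm : Filter.Tendsto sm Filter.atTop (nhds s))
    (htm : Filter.Tendsto tm Filter.atTop (nhds t))
    (hΔt_pos : ∀ m, 0 < Δt m) (hΔx_pos : ∀ m, 0 < Δx m)
    (hΔt : Filter.Tendsto Δt Filter.atTop (nhds 0))
    (hratio : ∃ C : ℝ, ∀ m, Δx m / Δt m ≤ C) :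
    Filter.Tendsto
      (fun m =>
        (sInf {y : ℝ | ∃ α ∈ Set.Icc (-β₀) β₀,
            sm m - Δt m * α ∈ Set.Icc (0 : ℝ) Lγ ∧
            y = ψ (sm m - Δt m * α) (tm m) + Δt m * Lag (sm m) α}
          - ψ (sm m) (tm m)) / Δt m)
      Filter.atTop
      (nhds (-(sSup ((fun α => α * deriv (fun x => ψ x t) s - Lag s α) ''
        Set.Icc (-β₀) β₀)))) := by
  obtain ⟨hs0, hsL⟩ := hs
  obtain ⟨ht0, htT⟩ := ht
  set U : Set (ℝ × ℝ) := Set.Ioo 0 Lγ ×ˢ Set.Ioo 0 T with hUdef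
  have hU : IsOpen U := isOpen_Ioo.prod isOpen_Ioo
  have hst : (s, t) ∈ U := ⟨⟨hs0, hsL⟩, ⟨ht0, htT⟩⟩
  set ψ2 : ℝ × ℝ → ℝ := fun p => ψ p.1 p.2 with hψ2def
  have hψcont : ContinuousOn ψ2 U := hψ.continuousOn
  have hdiff : ∀ p ∈ U, DifferentiableAt ℝ ψ2 p := fun p hp =>
    ((hψ.differentiableOn one_ne_zero) p hp).differentiableAt (hU.mem_nhds hp)
  set g : ℝ × ℝ → ℝ := fun p => fderiv ℝ ψ2 p (1, 0) with hgdef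
  have hg_cont : ContinuousOn g U := by
    have h1 := hψ.continuousOn_fderiv_of_isOpen hU le_rfl
    exact h1.clm_apply continuousOn_const
  have hpartial : ∀ x τ, (x, τ) ∈ U → HasDerivAt (fun y => ψ y τ) (g (x, τ)) x := by
    intro x τ hxτ
    have h1 : HasFDerivAt ψ2 (fderiv ℝ ψ2 (x, τ)) (x, τ) := (hdiff _ hxτ).hasFDerivAt
    have h2 : HasDerivAt (fun y : ℝ => ((y, τ) : ℝ × ℝ)) ((1 : ℝ), (0 : ℝ)) x :=
      HasDerivAt.prodMk (hasDerivAt_id x) (hasDerivAt_const x τ)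
    exact h1.comp_hasDerivAt x h2
  set μ : ℝ := g (s, t) with hμdef
  have hderiv_eq : deriv (fun x => ψ x t) s = μ := (hpartial s t hst).deriv
  rw [hderiv_eq]
  set K : Set ℝ := Set.Icc (-β₀) β₀ with hKdef
  have h0K : (0 : ℝ) ∈ K := by
    rw [hKdef]; constructor <;> [linarith; linarith]
  have hK_ne : K.Nonempty := ⟨0, h0K⟩
  have hK_cpt : IsCompact K := isCompact_Icc
  set h : ℝ → ℝ := fun α => Lag s α - α * μ with hhdef
  have htarget : sInf (h '' K) = -sSup ((fun α => α * μ - Lag s α) '' K) := by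
    have himg : h = fun x => -(x * μ - Lag s x) := by
      funext x; simp only [hhdef]; ring
    rw [himg, sInf_neg_image]
  rw [← htarget]
  have hsIccmem : s ∈ Set.Icc (0 : ℝ) Lγ := ⟨hs0.le, hsL.le⟩
  have hh_cont : ContinuousOn h K := by
    have h1 : ContinuousOn (fun α => Lag s α) K := by
      have h2 : ContinuousOn (fun α : ℝ => ((s, α) : ℝ × ℝ)) K :=
        (continuous_const.prodMk continuous_id).continuousOn
      exact hLag.comp h2 (fun α hα => ⟨hsIccmem, hα⟩)
    exact h1.sub ((continuous_id.mul continuous_const).continuousOn)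
  have hh_bdd : BddBelow (h '' K) := (hK_cpt.image_of_continuousOn hh_cont).bddBelow
  rw [Metric.tendsto_atTop]
  intro ε hε
  set ε₁ : ℝ := ε / (4 * (β₀ + 1)) with hε₁def
  have hε₁ : 0 < ε₁ := by positivity
  set ε₂ : ℝ := ε / 4 with hε₂def
  have hε₂ : 0 < ε₂ := by positivity
  -- continuity of g at (s,t)
  have hgat : ContinuousAt g (s, t) := hg_cont.continuousAt (hU.mem_nhds hst)
  obtain ⟨r₀, hr₀, hr₀'⟩ := Metric.continuousAt_iff.1 hgat ε₁ hε₁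
  obtain ⟨r₂, hr₂, hball⟩ := Metric.isOpen_iff.1 hU (s, t) hst
  set r : ℝ := min r₀ r₂ with hrdef
  have hr : 0 < r := lt_min hr₀ hr₂
  -- uniform continuity of Lag
  have hcpt2 : IsCompact (Set.Icc (0 : ℝ) Lγ ×ˢ K) := isCompact_Icc.prod hK_cpt
  have huc := hcpt2.uniformContinuousOn_of_continuous hLag
  rw [Metric.uniformContinuousOn_iff] at huc
  obtain ⟨δL, hδL, hδL'⟩ := huc ε₂ hε₂
  -- smallness constants
  set c₁ : ℝ := min (r / 2) (min (s / 2) ((Lγ - s) / 2)) with hc₁def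
  have hc₁ : 0 < c₁ := by
    apply lt_min (by linarith) (lt_min (by linarith) (by linarith))
  have hc₁r : 2 * c₁ ≤ r := by
    have := min_le_left (r / 2) (min (s / 2) ((Lγ - s) / 2)); rw [← hc₁def] at this; linarith
  have hc₁s : 2 * c₁ ≤ s := by
    have h1 := (min_le_right (r / 2) (min (s / 2) ((Lγ - s) / 2))).trans
      (min_le_left (s / 2) ((Lγ - s) / 2))
    rw [← hc₁def] at h1; linarith
  have hc₁L : 2 * c₁ ≤ Lγ - s := by
    have h1 := (min_le_right (r / 2) (min (s / 2) ((Lγ - s) / 2))).trans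
      (min_le_right (s / 2) ((Lγ - s) / 2))
    rw [← hc₁def] at h1; linarith
  -- eventual bounds
  obtain ⟨N₁, hN₁⟩ := Metric.tendsto_atTop.1 hsm (min c₁ δL) (lt_min hc₁ hδL)
  have hct : 0 < min r (min t (T - t)) := lt_min hr (lt_min ht0 (by linarith))
  obtain ⟨N₂, hN₂⟩ := Metric.tendsto_atTop.1 htm (min r (min t (T - t))) hct
  obtain ⟨N₃, hN₃⟩ := Metric.tendsto_atTop.1 hΔt (c₁ / β₀) (by positivity)
  refine ⟨max (max N₁ N₂) N₃, fun m hm => ?_⟩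
  have hm1 : |sm m - s| < min c₁ δL := by
    have := hN₁ m (le_trans (le_trans (le_max_left _ _) (le_max_left _ _)) hm)
    rwa [Real.dist_eq] at this
  have hm2 : |tm m - t| < min r (min t (T - t)) := by
    have := hN₂ m (le_trans (le_trans (le_max_right _ _) (le_max_left _ _)) hm)
    rwa [Real.dist_eq] at this
  have hm3 : Δt m < c₁ / β₀ := by
    have := hN₃ m (le_trans (le_max_right _ _) hm)
    rw [Real.dist_eq, sub_zero, abs_of_pos (hΔt_pos m)] at this
    exact this
  set d : ℝ := Δt m with hddef
  have hd0 : 0 < d := hΔt_pos m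
  have hdβ : d * β₀ < c₁ := (lt_div_iff₀ hβ₀).1 hm3
  have hsmc : |sm m - s| < c₁ := lt_of_lt_of_le hm1 (min_le_left _ _)
  have hsmδ : |sm m - s| < δL := lt_of_lt_of_le hm1 (min_le_right _ _)
  have htmr : |tm m - t| < r := lt_of_lt_of_le hm2 (min_le_left _ _)
  have htmT : tm m ∈ Set.Ioo (0 : ℝ) T := by
    have h1 : |tm m - t| < min t (T - t) := lt_of_lt_of_le hm2 (min_le_right _ _)
    have h2 : |tm m - t| < t := lt_of_lt_of_le h1 (min_le_left _ _)
    have h3 : |tm m - t| < T - t := lt_of_lt_of_le h1 (min_le_right _ _)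
    rw [abs_lt] at h2 h3
    exact ⟨by linarith [h2.1], by linarith [h3.2]⟩
  -- key geometric fact
  have hxU : ∀ x : ℝ, |x - s| < 2 * c₁ →
      (x, tm m) ∈ U ∧ |g (x, tm m) - μ| < ε₁ ∧ x ∈ Set.Ioo (0 : ℝ) Lγ := by
    intro x hx
    have hxr : |x - s| < r := lt_of_lt_of_le hx hc₁r
    have hdist : dist ((x, tm m) : ℝ × ℝ) ((s, t) : ℝ × ℝ) < r := by
      rw [Prod.dist_eq]
      apply max_lt
      · rwa [Real.dist_eq]
      · rwa [Real.dist_eq]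
    have hxIoo : x ∈ Set.Ioo (0 : ℝ) Lγ := by
      rw [abs_lt] at hx
      exact ⟨by linarith [hx.1, hc₁s], by linarith [hx.2, hc₁L]⟩
    have hmemU : (x, tm m) ∈ U :=
      hball (Metric.mem_ball.2 (lt_of_lt_of_le hdist (min_le_right _ _)))
    refine ⟨hmemU, ?_, hxIoo⟩
    have := hr₀' (lt_of_lt_of_le hdist (min_le_left _ _))
    rwa [Real.dist_eq] at this
  -- membership facts for α ∈ K
  have hαfact : ∀ α ∈ K, |sm m - d * α - s| < 2 * c₁ := by
    intro α hα
    have h1 : |d * α| ≤ d * β₀ := by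
      rw [abs_mul, abs_of_pos hd0]
      exact mul_le_mul_of_nonneg_left (abs_le.2 ⟨hα.1, hα.2⟩) hd0.le
    calc |sm m - d * α - s| ≤ |sm m - s| + |d * α| := by
          rw [show sm m - d * α - s = (sm m - s) + (-(d * α)) by ring]
          exact (abs_add_le _ _).trans (by rw [abs_neg])
      _ < c₁ + c₁ := by linarith
      _ = 2 * c₁ := by ring
  -- the set equals an image
  set F : ℝ → ℝ := fun α => ψ (sm m - d * α) (tm m) + d * Lag (sm m) α with hFdef
  have hA : {y : ℝ | ∃ α ∈ K, sm m - d * α ∈ Set.Icc (0 : ℝ) Lγ ∧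
      y = ψ (sm m - d * α) (tm m) + d * Lag (sm m) α} = F '' K := by
    ext y
    simp only [Set.mem_setOf_eq, Set.mem_image, hFdef]
    constructor
    · rintro ⟨α, hα, _, rfl⟩; exact ⟨α, hα, rfl⟩
    · rintro ⟨α, hα, rfl⟩
      refine ⟨α, hα, Set.mem_Icc.2 ⟨?_, ?_⟩, rfl⟩
      · exact ((hxU _ (hαfact α hα)).2.2.1).le
      · exact ((hxU _ (hαfact α hα)).2.2.2).le
  -- continuity of F on K
  have hF_cont : ContinuousOn F K := by
    apply ContinuousOn.add
    · have h2 : ContinuousOn (fun α : ℝ => ((sm m - d * α, tm m) : ℝ × ℝ)) K :=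
        ((continuous_const.sub (continuous_const.mul continuous_id)).prodMk
          continuous_const).continuousOn
      exact hψcont.comp h2 (fun α hα => (hxU _ (hαfact α hα)).1)
    · have h2 : ContinuousOn (fun α : ℝ => ((sm m, α) : ℝ × ℝ)) K :=
        (continuous_const.prodMk continuous_id).continuousOn
      exact continuousOn_const.mul (hLag.comp h2 (fun α hα => ⟨hsm_mem m, hα⟩))
  have hF_ne : (F '' K).Nonempty := hK_ne.image F
  have hF_bdd : BddBelow (F '' K) := (hK_cpt.image_of_continuousOn hF_cont).bddBelow
  -- affine map
  set c : ℝ := ψ (sm m) (tm m) with hcdef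
  set φ : ℝ → ℝ := fun y => (y - c) / d with hφdef
  have hφ_mono : Monotone φ := fun a b hab => by
    simp only [hφdef]
    exact (div_le_div_iff_of_pos_right hd0).2 (by linarith)
  have hφ_cont : ContinuousAt φ (sInf (F '' K)) :=
    ((continuous_id.sub continuous_const).div_const d).continuousAt
  have hval : (sInf (F '' K) - c) / d = sInf ((fun α => φ (F α)) '' K) := by
    have h1 : φ (sInf (F '' K)) = sInf (φ '' (F '' K)) :=
      hφ_mono.map_csInf_of_continuousAt hφ_cont hF_ne hF_bdd
    rw [Set.image_image] at h1
    exact h1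
  -- pointwise estimate
  have hpt : ∀ α ∈ K, |φ (F α) - h α| ≤ ε / 2 := by
    intro α hα
    have hαβ : |α| ≤ β₀ := abs_le.2 ⟨hα.1, hα.2⟩
    -- Part A : mean value estimate
    set I : Set ℝ := Set.Icc (sm m - d * β₀) (sm m + d * β₀) with hIdef
    have hconv : Convex ℝ I := convex_Icc _ _
    have hxI : ∀ x ∈ I, |x - s| < 2 * c₁ := by
      intro x hx
      have h1 : |x - sm m| ≤ d * β₀ := by
        rw [abs_le]; constructor
        · linarith [hx.1]
        · linarith [hx.2]
      calc |x - s| ≤ |x - sm m| + |sm m - s| := by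
            rw [show x - s = (x - sm m) + (sm m - s) by ring]; exact abs_add_le _ _
        _ < c₁ + c₁ := by linarith
        _ = 2 * c₁ := by ring
    set ftil : ℝ → ℝ := fun x => ψ x (tm m) - μ * x with hftdef
    have hder : ∀ x ∈ I, HasDerivWithinAt ftil (g (x, tm m) - μ) I x := by
      intro x hx
      have h1 : HasDerivAt (fun y => ψ y (tm m)) (g (x, tm m)) x :=
        hpartial x (tm m) (hxU x (hxI x hx)).1
      have h2 : HasDerivAt (fun y : ℝ => μ * y) μ x := by
        simpa using (hasDerivAt_id x).const_mul μ
      exact (h1.sub h2).hasDerivWithinAt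
    have hbound : ∀ x ∈ I, ‖g (x, tm m) - μ‖ ≤ ε₁ := by
      intro x hx
      exact le_of_lt ((hxU x (hxI x hx)).2.1)
    have hsmI : sm m ∈ I := by
      have hdb : 0 ≤ d * β₀ := by positivity
      simp only [hIdef, Set.mem_Icc]
      constructor <;> linarith
    have hyI : sm m - d * α ∈ I := by
      have h1 : |d * α| ≤ d * β₀ := by
        rw [abs_mul, abs_of_pos hd0]
        exact mul_le_mul_of_nonneg_left hαβ hd0.le
      rw [abs_le] at h1
      simp only [hIdef, Set.mem_Icc]
      constructor
      · linarith [h1.2]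
      · linarith [h1.1]
    have hmvt := hconv.norm_image_sub_le_of_norm_hasDerivWithin_le hder hbound hsmI hyI
    -- ‖ftil (sm m - d*α) - ftil (sm m)‖ ≤ ε₁ * ‖sm m - d*α - sm m‖
    have hnorm : ‖(sm m - d * α) - sm m‖ = d * |α| := by
      rw [show (sm m - d * α) - sm m = -(d * α) by ring, norm_neg, Real.norm_eq_abs,
        abs_mul, abs_of_pos hd0]
    rw [hnorm] at hmvt
    have hA1 : |ψ (sm m - d * α) (tm m) - c + μ * (d * α)| ≤ ε₁ * (d * β₀) := by
      have h2 : ftil (sm m - d * α) - ftil (sm m) =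
          ψ (sm m - d * α) (tm m) - c + μ * (d * α) := by
        simp only [hftdef, hcdef]; ring
      rw [Real.norm_eq_abs, h2] at hmvt
      refine hmvt.trans ?_
      have : d * |α| ≤ d * β₀ := mul_le_mul_of_nonneg_left hαβ hd0.le
      nlinarith [hε₁.le]
    have hA2 : |(ψ (sm m - d * α) (tm m) - c) / d + μ * α| ≤ ε₁ * β₀ := by
      have h3 : (ψ (sm m - d * α) (tm m) - c) / d + μ * α =
          (ψ (sm m - d * α) (tm m) - c + μ * (d * α)) / d := by
        field_simp
      rw [h3, abs_div, abs_of_pos hd0, div_le_iff₀ hd0]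
      calc |ψ (sm m - d * α) (tm m) - c + μ * (d * α)| ≤ ε₁ * (d * β₀) := hA1
        _ = ε₁ * β₀ * d := by ring
    -- Part B : Lagrangian uniform continuity
    have hB : |Lag (sm m) α - Lag s α| ≤ ε₂ := by
      have h1 : ((sm m, α) : ℝ × ℝ) ∈ Set.Icc (0 : ℝ) Lγ ×ˢ K := ⟨hsm_mem m, hα⟩
      have h2 : ((s, α) : ℝ × ℝ) ∈ Set.Icc (0 : ℝ) Lγ ×ˢ K := ⟨hsIccmem, hα⟩
      have h3 : dist ((sm m, α) : ℝ × ℝ) ((s, α) : ℝ × ℝ) < δL := by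
        rw [Prod.dist_eq]
        apply max_lt
        · rwa [Real.dist_eq]
        · simpa using hδL
      have := hδL' _ h1 _ h2 h3
      rw [Real.dist_eq] at this
      exact this.le
    -- combine
    have hφF : φ (F α) = (ψ (sm m - d * α) (tm m) - c) / d + Lag (sm m) α := by
      simp only [hφdef, hFdef]
      field_simp
      ring
    have hε₁β : ε₁ * β₀ ≤ ε / 4 := by
      rw [hε₁def]
      rw [div_mul_eq_mul_div, div_le_div_iff₀ (by positivity) (by norm_num : (0:ℝ) < 4)]
      nlinarith [hβ₀.le, hε.le]
    calc |φ (F α) - h α|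
        = |((ψ (sm m - d * α) (tm m) - c) / d + μ * α) + (Lag (sm m) α - Lag s α)| := by
          rw [hφF]; simp only [hhdef]; ring_nf
      _ ≤ |(ψ (sm m - d * α) (tm m) - c) / d + μ * α| + |Lag (sm m) α - Lag s α| :=
          abs_add_le _ _
      _ ≤ ε₁ * β₀ + ε₂ := add_le_add hA2 hB
      _ ≤ ε / 4 + ε / 4 := by rw [hε₂def]; linarith
      _ = ε / 2 := by ring
  -- bddBelow of the rescaled image
  have hφF_cont : ContinuousOn (fun α => φ (F α)) K :=
    (((continuous_id.sub continuous_const).div_const d).comp_continuousOn hF_cont)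
  have hφF_bdd : BddBelow ((fun α => φ (F α)) '' K) :=
    (hK_cpt.image_of_continuousOn hφF_cont).bddBelow
  -- sInf comparison
  have hcmp : |sInf ((fun α => φ (F α)) '' K) - sInf (h '' K)| ≤ ε / 2 := by
    have h1 := csInf_image_le_of_pointwise (f := fun α => φ (F α)) (h := h)
      (ε := ε / 2) hK_ne hφF_bdd
      (fun x hx => by linarith [(abs_le.1 (hpt x hx)).2])
    have h2 := csInf_image_le_of_pointwise (f := h) (h := fun α => φ (F α))
      (ε := ε / 2) hK_ne hh_bdd
      (fun x hx => by linarith [(abs_le.1 (hpt x hx)).1])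
    rw [abs_le]
    constructor <;> linarith
  -- conclude
  rw [hA, Real.dist_eq, hval]
  calc |sInf ((fun α => φ (F α)) '' K) - sInf (h '' K)| ≤ ε / 2 := hcmp
    _ < ε := by linarith
end

section
/- Let ξ : {t* + iΔt : i = 0,…,K} → ℝ be a discrete trajectory with increments bounded by |ξ(t + Δt) − ξ(t)| ≤ β₀Δt + Δx, and let ξ̃ : [t*, t* + KΔt] → ℝ be its piecewise linear interpolation. If L : ℝ × ℝ → ℝ is ℓ₀-Lipschitz on I × [−β₀ − Δx/Δt, β₀ + Δx/Δt] for an interval I containing the range of ξ̃, then ∑_{i=1}^{K} Δt·L(ξ(t* + iΔt), (ξ(t* + iΔt) − ξ(t* + (i−1)Δt))/Δt) ≥ ∫_{t*}^{t*+KΔt} L(ξ̃(t), ξ̃'(t)) dt − K·Δt·ℓ₀·(β₀Δt + Δx). -/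
open MeasureTheory Set

set_option maxHeartbeats 1000000 in
/-- comparison of the discrete Riemann sum of the action with the
continuous action along the piecewise linear interpolation of a discrete
trajectory. -/
theorem discrete_action_vs_interpolated_action
    (tstar Δt Δx β₀ ℓ₀ : ℝ)
    (hΔt : 0 < Δt) (hΔx : 0 < Δx) (hβ₀ : 0 < β₀) (hℓ₀ : 0 ≤ ℓ₀)
    (K : ℕ) (hK : 0 < K)
    (ξ : Fin (K + 1) → ℝ)
    (hinc : ∀ i : Fin K, |ξ i.succ - ξ i.castSucc| ≤ β₀ * Δt + Δx)
    (ξt ξ' : ℝ → ℝ)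
    (hξt : ∀ i : Fin K, ∀ t ∈ Set.Icc (tstar + (i : ℕ) * Δt) (tstar + ((i : ℕ) + 1) * Δt),
      ξt t = ξ i.castSucc + ((t - (tstar + (i : ℕ) * Δt)) / Δt) * (ξ i.succ - ξ i.castSucc))
    (hξ' : ∀ i : Fin K, ∀ t ∈ Set.Ioo (tstar + (i : ℕ) * Δt) (tstar + ((i : ℕ) + 1) * Δt),
      ξ' t = (ξ i.succ - ξ i.castSucc) / Δt)
    (I : Set ℝ)
    (hI : ∀ t ∈ Set.Icc tstar (tstar + K * Δt), ξt t ∈ I)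
    (Lag : ℝ → ℝ → ℝ)
    (hLip : ∀ s₁ ∈ I, ∀ s₂ ∈ I,
      ∀ α₁ ∈ Set.Icc (-(β₀ + Δx / Δt)) (β₀ + Δx / Δt),
      ∀ α₂ ∈ Set.Icc (-(β₀ + Δx / Δt)) (β₀ + Δx / Δt),
      |Lag s₁ α₁ - Lag s₂ α₂| ≤ ℓ₀ * (|s₁ - s₂| + |α₁ - α₂|)) :
    ∑ i : Fin K, Δt * Lag (ξ i.succ) ((ξ i.succ - ξ i.castSucc) / Δt) ≥
      (∫ t in tstar..(tstar + K * Δt), Lag (ξt t) (ξ' t))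
        - K * Δt * ℓ₀ * (β₀ * Δt + Δx) := by
  set M := β₀ * Δt + Δx with hMdef
  have hM0 : 0 < M := by positivity
  set a : ℕ → ℝ := fun n => tstar + n * Δt with hadef
  have ha_succ : ∀ n : ℕ, a (n + 1) = a n + Δt := by
    intro n; simp only [hadef]; push_cast; ring
  have ha_lt : ∀ n : ℕ, a n < a (n + 1) := by
    intro n; rw [ha_succ]; linarith
  have ha_mono : Monotone a := monotone_nat_of_le_succ fun n => (ha_lt n).le
  -- interval endpoints match the hypothesis form
  have hcast : ∀ i : Fin K, a (↑i + 1) = tstar + ((i : ℕ) + 1) * Δt := by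
    intro i; simp only [hadef]; push_cast; ring
  have hsub : ∀ i : Fin K, Set.Icc (a ↑i) (a (↑i + 1)) ⊆ Set.Icc tstar (tstar + K * Δt) := by
    intro i t ht
    have h1 : a 0 ≤ a ↑i := ha_mono (Nat.zero_le _)
    have h2 : a (↑i + 1) ≤ a K := ha_mono (by omega)
    have ha0 : a 0 = tstar := by simp [hadef]
    have haK : a K = tstar + K * Δt := rfl
    exact ⟨by rw [← ha0]; exact h1.trans ht.1, by rw [← haK]; exact ht.2.trans h2⟩
  -- velocity in box
  have hvel : ∀ i : Fin K, (ξ i.succ - ξ i.castSucc) / Δt ∈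
      Set.Icc (-(β₀ + Δx / Δt)) (β₀ + Δx / Δt) := by
    intro i
    have h := hinc i
    have habs : |(ξ i.succ - ξ i.castSucc) / Δt| ≤ β₀ + Δx / Δt := by
      rw [abs_div, abs_of_pos hΔt, div_le_iff₀ hΔt]
      calc |ξ i.succ - ξ i.castSucc| ≤ β₀ * Δt + Δx := h
        _ = (β₀ + Δx / Δt) * Δt := by field_simp
    exact abs_le.mp habs
  -- the affine interpolant on each subinterval
  set g : Fin K → ℝ → ℝ := fun i t =>
    Lag (ξ i.castSucc + ((t - a ↑i) / Δt) * (ξ i.succ - ξ i.castSucc))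
      ((ξ i.succ - ξ i.castSucc) / Δt) with hgdef
  have harg : ∀ i : Fin K, ∀ t ∈ Set.Icc (a ↑i) (a (↑i + 1)),
      ξ i.castSucc + ((t - a ↑i) / Δt) * (ξ i.succ - ξ i.castSucc) ∈ I := by
    intro i t ht
    have ht' : t ∈ Set.Icc (tstar + (i : ℕ) * Δt) (tstar + ((i : ℕ) + 1) * Δt) := by
      rwa [← hcast i]
    rw [← hξt i t ht']
    exact hI t (hsub i ht)
  have hsuccI : ∀ i : Fin K, ξ i.succ ∈ I := by
    intro i
    have hb : a (↑i + 1) ∈ Set.Icc (a ↑i) (a (↑i + 1)) :=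
      ⟨(ha_lt _).le, le_refl _⟩
    have := harg i (a (↑i + 1)) hb
    have heq : ξ i.castSucc + ((a (↑i + 1) - a ↑i) / Δt) * (ξ i.succ - ξ i.castSucc)
        = ξ i.succ := by
      rw [ha_succ]
      field_simp
      ring
    rwa [heq] at this
  -- continuity of g i on the closed subinterval
  have hg_cont : ∀ i : Fin K, ContinuousOn (g i) (Set.Icc (a ↑i) (a (↑i + 1))) := by
    intro i
    have hC : 0 ≤ ℓ₀ * (|ξ i.succ - ξ i.castSucc| / Δt) := by positivity
    apply LipschitzOnWith.continuousOn (K := ⟨ℓ₀ * (|ξ i.succ - ξ i.castSucc| / Δt), hC⟩)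
    apply LipschitzOnWith.of_dist_le_mul
    intro x hx y hy
    rw [Real.dist_eq, Real.dist_eq]
    have hb := hLip _ (harg i x hx) _ (harg i y hy) _ (hvel i) _ (hvel i)
    have hdiff : (ξ i.castSucc + ((x - a ↑i) / Δt) * (ξ i.succ - ξ i.castSucc))
        - (ξ i.castSucc + ((y - a ↑i) / Δt) * (ξ i.succ - ξ i.castSucc))
        = ((x - y) / Δt) * (ξ i.succ - ξ i.castSucc) := by ring
    calc |g i x - g i y| ≤ ℓ₀ * (|((x - y) / Δt) * (ξ i.succ - ξ i.castSucc)| +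
          |(ξ i.succ - ξ i.castSucc) / Δt - (ξ i.succ - ξ i.castSucc) / Δt|) := by
          simpa only [hgdef, hdiff] using hb
      _ = ℓ₀ * (|ξ i.succ - ξ i.castSucc| / Δt) * |x - y| := by
          rw [sub_self, abs_zero, add_zero, abs_mul, abs_div, abs_of_pos hΔt]; ring
  have hg_int : ∀ i : Fin K, IntervalIntegrable (g i) volume (a ↑i) (a (↑i + 1)) := by
    intro i
    apply ContinuousOn.intervalIntegrable
    rw [Set.uIcc_of_le (ha_lt _).le]
    exact hg_cont i
  -- a.e. equality of the integrand with g i on each subinterval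
  have hae : ∀ i : Fin K, ∀ᵐ t ∂(volume : Measure ℝ),
      t ∈ Set.uIoc (a ↑i) (a (↑i + 1)) → Lag (ξt t) (ξ' t) = g i t := by
    intro i
    have h0 : ∀ᵐ t : ℝ ∂volume, t ≠ a (↑i + 1) := by
      rw [MeasureTheory.ae_iff]
      have : {t : ℝ | ¬ t ≠ a (↑i + 1)} = {a (↑i + 1)} := by ext t; simp
      rw [this]
      exact measure_singleton _
    filter_upwards [h0] with t ht htmem
    rw [Set.uIoc_of_le (ha_lt _).le] at htmem
    have htoo : t ∈ Set.Ioo (a ↑i) (a (↑i + 1)) :=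
      ⟨htmem.1, lt_of_le_of_ne htmem.2 ht⟩
    have htoo' : t ∈ Set.Ioo (tstar + (i : ℕ) * Δt) (tstar + ((i : ℕ) + 1) * Δt) := by
      rwa [← hcast i]
    have hticc : t ∈ Set.Icc (tstar + (i : ℕ) * Δt) (tstar + ((i : ℕ) + 1) * Δt) :=
      ⟨htoo'.1.le, htoo'.2.le⟩
    simp only [hgdef, hadef]
    rw [hξt i t hticc, hξ' i t htoo']
  have hf_int : ∀ i : Fin K,
      IntervalIntegrable (fun t => Lag (ξt t) (ξ' t)) volume (a ↑i) (a (↑i + 1)) := by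
    intro i
    refine (hg_int i).congr_ae ?_
    filter_upwards [MeasureTheory.ae_restrict_of_ae (hae i),
      MeasureTheory.ae_restrict_mem measurableSet_uIoc] with t ht hmem
    exact (ht hmem).symm
  -- per-interval bound
  have key : ∀ i : Fin K, (∫ t in (a ↑i)..(a (↑i + 1)), Lag (ξt t) (ξ' t))
      ≤ Δt * Lag (ξ i.succ) ((ξ i.succ - ξ i.castSucc) / Δt) + Δt * (ℓ₀ * M) := by
    intro i
    have heq : (∫ t in (a ↑i)..(a (↑i + 1)), Lag (ξt t) (ξ' t))
        = ∫ t in (a ↑i)..(a (↑i + 1)), g i t :=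
      intervalIntegral.integral_congr_ae (hae i)
    rw [heq]
    have hbound : ∀ t ∈ Set.Icc (a ↑i) (a (↑i + 1)),
        g i t ≤ Lag (ξ i.succ) ((ξ i.succ - ξ i.castSucc) / Δt) + ℓ₀ * M := by
      intro t ht
      have hb := hLip _ (harg i t ht) _ (hsuccI i) _ (hvel i) _ (hvel i)
      have hθ1 : 0 ≤ (t - a ↑i) / Δt := by
        apply div_nonneg _ hΔt.le; linarith [ht.1]
      have hθ2 : (t - a ↑i) / Δt ≤ 1 := by
        rw [div_le_one hΔt]
        have := ht.2
        rw [ha_succ] at this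
        linarith
      have hdiff : (ξ i.castSucc + ((t - a ↑i) / Δt) * (ξ i.succ - ξ i.castSucc)) - ξ i.succ
          = ((t - a ↑i) / Δt - 1) * (ξ i.succ - ξ i.castSucc) := by ring
      have habs : |(ξ i.castSucc + ((t - a ↑i) / Δt) * (ξ i.succ - ξ i.castSucc)) - ξ i.succ|
          ≤ M := by
        rw [hdiff, abs_mul]
        calc |(t - a ↑i) / Δt - 1| * |ξ i.succ - ξ i.castSucc|
            ≤ 1 * |ξ i.succ - ξ i.castSucc| := by
              apply mul_le_mul_of_nonneg_right _ (abs_nonneg _)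
              rw [abs_le]; constructor <;> linarith
          _ ≤ M := by rw [one_mul]; exact hinc i
      have h2 : |g i t - Lag (ξ i.succ) ((ξ i.succ - ξ i.castSucc) / Δt)| ≤ ℓ₀ * M := by
        calc |g i t - Lag (ξ i.succ) ((ξ i.succ - ξ i.castSucc) / Δt)|
            ≤ ℓ₀ * (|(ξ i.castSucc + ((t - a ↑i) / Δt) * (ξ i.succ - ξ i.castSucc)) - ξ i.succ|
                + |(ξ i.succ - ξ i.castSucc) / Δt - (ξ i.succ - ξ i.castSucc) / Δt|) := hb
          _ ≤ ℓ₀ * M := by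
              rw [sub_self, abs_zero, add_zero]
              exact mul_le_mul_of_nonneg_left habs hℓ₀
      have := (abs_le.mp h2).2
      linarith
    calc (∫ t in (a ↑i)..(a (↑i + 1)), g i t)
        ≤ ∫ _t in (a ↑i)..(a (↑i + 1)),
            (Lag (ξ i.succ) ((ξ i.succ - ξ i.castSucc) / Δt) + ℓ₀ * M) :=
          intervalIntegral.integral_mono_on (ha_lt _).le (hg_int i)
            intervalIntegrable_const hbound
      _ = Δt * Lag (ξ i.succ) ((ξ i.succ - ξ i.castSucc) / Δt) + Δt * (ℓ₀ * M) := by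
          rw [intervalIntegral.integral_const, ha_succ, smul_eq_mul]
          ring
  -- split the integral
  have hint : ∀ k < K, IntervalIntegrable (fun t => Lag (ξt t) (ξ' t)) volume (a k) (a (k + 1)) := by
    intro k hk
    exact hf_int ⟨k, hk⟩
  have hsplit := intervalIntegral.sum_integral_adjacent_intervals hint
  have ha0 : a 0 = tstar := by simp [hadef]
  have haK : a K = tstar + K * Δt := rfl
  rw [ha0, haK] at hsplit
  -- reindex the discrete sum over ℕ
  set ξn : ℕ → ℝ := fun n => ξ ⟨min n K, by omega⟩ with hξndef
  have hξn1 : ∀ i : Fin K, ξ i.castSucc = ξn ↑i := by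
    intro i
    simp only [hξndef]
    congr 1
    ext
    simp [Nat.min_eq_left i.isLt.le]
  have hξn2 : ∀ i : Fin K, ξ i.succ = ξn (↑i + 1) := by
    intro i
    simp only [hξndef]
    congr 1
    ext
    simp [Nat.min_eq_left (by omega : (i : ℕ) + 1 ≤ K)]
  have hsum : ∑ i : Fin K, Δt * Lag (ξ i.succ) ((ξ i.succ - ξ i.castSucc) / Δt)
      = ∑ k ∈ Finset.range K, Δt * Lag (ξn (k + 1)) ((ξn (k + 1) - ξn k) / Δt) := by
    rw [← Fin.sum_univ_eq_sum_range (fun k => Δt * Lag (ξn (k + 1)) ((ξn (k + 1) - ξn k) / Δt)) K]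
    apply Finset.sum_congr rfl
    intro i _
    rw [hξn1 i, hξn2 i]
  have hkey' : ∀ k ∈ Finset.range K,
      (∫ t in (a k)..(a (k + 1)), Lag (ξt t) (ξ' t))
        ≤ Δt * Lag (ξn (k + 1)) ((ξn (k + 1) - ξn k) / Δt) + Δt * (ℓ₀ * M) := by
    intro k hk
    have hk' : k < K := Finset.mem_range.mp hk
    have := key ⟨k, hk'⟩
    rwa [hξn1 ⟨k, hk'⟩, hξn2 ⟨k, hk'⟩] at this
  have htot : (∫ t in tstar..(tstar + K * Δt), Lag (ξt t) (ξ' t))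
      ≤ (∑ k ∈ Finset.range K, Δt * Lag (ξn (k + 1)) ((ξn (k + 1) - ξn k) / Δt))
        + K * (Δt * (ℓ₀ * M)) := by
    rw [← hsplit]
    calc ∑ k ∈ Finset.range K, ∫ t in (a k)..(a (k + 1)), Lag (ξt t) (ξ' t)
        ≤ ∑ k ∈ Finset.range K,
            (Δt * Lag (ξn (k + 1)) ((ξn (k + 1) - ξn k) / Δt) + Δt * (ℓ₀ * M)) :=
          Finset.sum_le_sum hkey'
      _ = (∑ k ∈ Finset.range K, Δt * Lag (ξn (k + 1)) ((ξn (k + 1) - ξn k) / Δt))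
            + K * (Δt * (ℓ₀ * M)) := by
          rw [Finset.sum_add_distrib, Finset.sum_const, Finset.card_range, nsmul_eq_mul]
  rw [ge_iff_le, hsum]
  have : (K : ℝ) * Δt * ℓ₀ * M = K * (Δt * (ℓ₀ * M)) := by ring
  rw [hMdef] at htot ⊢
  linarith [htot]
end

section
/- Let (v_m) be functions v_m : G_m → ℝ on grids G_m ⊆ [0, L] × [0, T] with G_m → [0, L] × [0, T], all ℓ-Lipschitz (with respect to the ambient Euclidean metric restricted to G_m) and all taking the same values at t = 0 given by a fixed bounded function g on the spatial grid points. Then there exists a subsequence (v_{m_k}) and an ℓ-Lipschitz function u : [0, L] × [0, T] → ℝ such that v_{m_k} uniformly converges to u when G_{m_k} → [0, L] × [0, T], i.e., v_{m_k}(p_k) → u(p) whenever p_k ∈ G_{m_k} converge to p. -/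
/-- discrete Ascoli–Arzelà, Proposition `nogymn`: equiLipschitz
grid functions with a common bounded initial datum admit a subsequence
uniformly converging (in the spaces-convergence sense) to an ℓ-Lipschitz
function on the rectangle. -/
theorem discrete_ascoli_arzela
    (L T ℓ : ℝ) (hL : 0 < L) (hT : 0 < T) (hℓ : 0 ≤ ℓ)
    (G : ℕ → Set (ℝ × ℝ))
    (hGsub : ∀ m, G m ⊆ Set.Icc (0 : ℝ) L ×ˢ Set.Icc (0 : ℝ) T)
    (hGconv : ∀ p ∈ Set.Icc (0 : ℝ) L ×ˢ Set.Icc (0 : ℝ) T,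
      ∃ pm : ℕ → ℝ × ℝ, (∀ m, pm m ∈ G m) ∧
        Filter.Tendsto pm Filter.atTop (nhds p))
    (v : ℕ → ℝ × ℝ → ℝ)
    (hLip : ∀ m, ∀ p ∈ G m, ∀ q ∈ G m, |v m p - v m q| ≤ ℓ * dist p q)
    (g : ℝ → ℝ) (C : ℝ) (hgbd : ∀ x, |g x| ≤ C)
    (hinit_ne : ∀ m, ∃ x, (x, (0 : ℝ)) ∈ G m)
    (hinit : ∀ m, ∀ x, (x, (0 : ℝ)) ∈ G m → v m (x, 0) = g x) :
    ∃ φ : ℕ → ℕ, StrictMono φ ∧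
      ∃ u : ℝ × ℝ → ℝ,
        (∀ p ∈ Set.Icc (0 : ℝ) L ×ˢ Set.Icc (0 : ℝ) T,
          ∀ q ∈ Set.Icc (0 : ℝ) L ×ˢ Set.Icc (0 : ℝ) T,
          |u p - u q| ≤ ℓ * dist p q) ∧
        (∀ p ∈ Set.Icc (0 : ℝ) L ×ˢ Set.Icc (0 : ℝ) T,
          ∀ pk : ℕ → ℝ × ℝ, (∀ k, pk k ∈ G (φ k)) →
          Filter.Tendsto pk Filter.atTop (nhds p) →
          Filter.Tendsto (fun k => v (φ k) (pk k)) Filter.atTop (nhds (u p))) := by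
  classical
  set Q : Set (ℝ × ℝ) := Set.Icc (0 : ℝ) L ×ˢ Set.Icc (0 : ℝ) T with hQdef
  have hQc : IsCompact Q := isCompact_Icc.prod isCompact_Icc
  haveI : CompactSpace Q := isCompact_iff_compactSpace.1 hQc
  set ℓ' : NNReal := ⟨ℓ, hℓ⟩ with hℓ'def
  have hℓ'coe : (ℓ' : ℝ) = ℓ := rfl
  -- Lipschitz on the grids
  have hlow : ∀ m, LipschitzOnWith ℓ' (v m) (G m) := by
    intro m
    rw [lipschitzOnWith_iff_dist_le_mul]
    intro x hx y hy
    rw [Real.dist_eq]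
    exact hLip m x hx y hy
  -- Lipschitz extensions to the whole plane
  have hext : ∀ m, ∃ w : ℝ × ℝ → ℝ, LipschitzWith ℓ' w ∧ Set.EqOn (v m) w (G m) :=
    fun m => (hlow m).extend_real
  choose w hwLip hwEq using hext
  have hwdist : ∀ m p q, |w m p - w m q| ≤ ℓ * dist p q := by
    intro m p q
    have := (hwLip m).dist_le_mul p q
    rwa [Real.dist_eq, hℓ'coe] at this
  -- diameter bound on Q
  have hQd : ∀ p ∈ Q, ∀ q ∈ Q, dist p q ≤ max L T := by
    rintro ⟨p1, p2⟩ ⟨hp1, hp2⟩ ⟨q1, q2⟩ ⟨hq1, hq2⟩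
    rw [Prod.dist_eq]
    refine max_le_max ?_ ?_
    · have := Real.dist_le_of_mem_Icc hp1 hq1
      simpa using this
    · have := Real.dist_le_of_mem_Icc hp2 hq2
      simpa using this
  -- equiboundedness on Q
  set M : ℝ := C + ℓ * max L T with hMdef
  have hwbd : ∀ m, ∀ p ∈ Q, |w m p| ≤ M := by
    intro m p hp
    obtain ⟨x₀, hx₀⟩ := hinit_ne m
    have hx₀Q : ((x₀, (0 : ℝ)) : ℝ × ℝ) ∈ Q := hGsub m hx₀
    have h1 : w m (x₀, 0) = g x₀ := by
      rw [← hwEq m hx₀, hinit m x₀ hx₀]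
    calc |w m p| ≤ |w m p - w m (x₀, 0)| + |w m (x₀, 0)| := by
          have := abs_add_le (w m p - w m (x₀, 0)) (w m (x₀, 0))
          simpa using this
      _ ≤ ℓ * dist p ((x₀, (0 : ℝ)) : ℝ × ℝ) + C := by
          refine add_le_add (hwdist m p _) ?_
          rw [h1]; exact hgbd x₀
      _ ≤ ℓ * max L T + C := by
          refine add_le_add_left ?_ C
          exact mul_le_mul_of_nonneg_left (hQd p hp _ hx₀Q) hℓ
      _ = M := by ring
  -- the restricted bounded continuous functions
  let F : ℕ → BoundedContinuousFunction Q ℝ := fun m =>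
    BoundedContinuousFunction.mkOfCompact
      ⟨fun q : Q => w m q, (hwLip m).continuous.comp continuous_subtype_val⟩
  have hFapp : ∀ m (x : Q), F m x = w m x := fun m x => rfl
  -- Arzelà–Ascoli
  set A : Set (BoundedContinuousFunction Q ℝ) := Set.range F with hAdef
  have hins : ∀ (f : BoundedContinuousFunction Q ℝ) (x : Q), f ∈ A →
      f x ∈ Set.Icc (-M) M := by
    rintro f x ⟨m, rfl⟩
    have := hwbd m x x.2
    rw [← hFapp m x] at this
    exact abs_le.1 this
  have hequi : Equicontinuous ((↑) : A → Q → ℝ) := by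
    intro x
    rw [Metric.equicontinuousAt_iff]
    intro ε hε
    refine ⟨ε / (ℓ + 1), by positivity, fun y hy i => ?_⟩
    obtain ⟨m, hm⟩ := i.2
    have hival : (i : BoundedContinuousFunction Q ℝ) = F m := hm.symm
    rw [hival, dist_comm]
    have h1 : dist (F m y) (F m x) ≤ ℓ * dist y x := by
      rw [hFapp, hFapp, Real.dist_eq, Subtype.dist_eq]
      exact hwdist m y x
    have h2 : ℓ * dist y x ≤ ℓ * (ε / (ℓ + 1)) :=
      mul_le_mul_of_nonneg_left hy.le hℓ
    have h3 : ℓ * (ε / (ℓ + 1)) < ε := by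
      have hδ : 0 < ε / (ℓ + 1) := by positivity
      have : ℓ * (ε / (ℓ + 1)) < (ℓ + 1) * (ε / (ℓ + 1)) := by nlinarith
      calc ℓ * (ε / (ℓ + 1)) < (ℓ + 1) * (ε / (ℓ + 1)) := this
        _ = ε := by field_simp
    exact lt_of_le_of_lt (h1.trans h2) h3
  have hcomp : IsCompact (closure A) :=
    BoundedContinuousFunction.arzela_ascoli (Set.Icc (-M) M) isCompact_Icc A hins hequi
  -- extract a convergent subsequence
  obtain ⟨u₀, _, φ, hφ, hconv⟩ :=
    hcomp.tendsto_subseq (x := F) (fun m => subset_closure ⟨m, rfl⟩)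
  have hd0 : Filter.Tendsto (fun k => dist (F (φ k)) u₀) Filter.atTop (nhds 0) :=
    tendsto_iff_dist_tendsto_zero.1 hconv
  -- pointwise convergence
  have hpt : ∀ x : Q, Filter.Tendsto (fun k => F (φ k) x) Filter.atTop (nhds (u₀ x)) := by
    intro x
    rw [tendsto_iff_dist_tendsto_zero]
    refine squeeze_zero (fun k => dist_nonneg) (fun k => ?_) hd0
    exact BoundedContinuousFunction.dist_coe_le_dist x
  -- the limit function
  refine ⟨φ, hφ, fun p => if h : p ∈ Q then u₀ ⟨p, h⟩ else 0, ?_, ?_⟩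
  · -- Lipschitz
    intro p hp q hq
    simp only [dif_pos hp, dif_pos hq]
    have hlim : Filter.Tendsto
        (fun k => |F (φ k) ⟨p, hp⟩ - F (φ k) ⟨q, hq⟩|) Filter.atTop
        (nhds |u₀ ⟨p, hp⟩ - u₀ ⟨q, hq⟩|) :=
      ((hpt ⟨p, hp⟩).sub (hpt ⟨q, hq⟩)).abs
    refine le_of_tendsto hlim (Filter.Eventually.of_forall fun k => ?_)
    rw [hFapp, hFapp]
    exact hwdist (φ k) p q
  · -- convergence along the grids
    intro p hp pk hpk hpk_conv
    simp only [dif_pos hp]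
    have hvw : ∀ k, v (φ k) (pk k) = w (φ k) (pk k) := fun k => hwEq (φ k) (hpk k)
    rw [tendsto_iff_dist_tendsto_zero]
    have hdk : Filter.Tendsto (fun k => dist (pk k) p) Filter.atTop (nhds 0) :=
      tendsto_iff_dist_tendsto_zero.1 hpk_conv
    have hbound : Filter.Tendsto
        (fun k => ℓ * dist (pk k) p + dist (F (φ k)) u₀) Filter.atTop (nhds 0) := by
      have := (Filter.Tendsto.mul (tendsto_const_nhds (x := ℓ)) hdk).add hd0
      simpa using this
    refine squeeze_zero (fun k => dist_nonneg) (fun k => ?_) hbound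
    rw [hvw k, Real.dist_eq]
    calc |w (φ k) (pk k) - u₀ ⟨p, hp⟩|
        ≤ |w (φ k) (pk k) - w (φ k) p| + |w (φ k) p - u₀ ⟨p, hp⟩| := by
          have := abs_add_le (w (φ k) (pk k) - w (φ k) p) (w (φ k) p - u₀ ⟨p, hp⟩)
          simpa using this
      _ ≤ ℓ * dist (pk k) p + dist (F (φ k)) u₀ := by
          refine add_le_add (hwdist (φ k) _ _) ?_
          have h1 : |F (φ k) ⟨p, hp⟩ - u₀ ⟨p, hp⟩| ≤ dist (F (φ k)) u₀ := by
            rw [← Real.dist_eq]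
            exact BoundedContinuousFunction.dist_coe_le_dist _
          rwa [hFapp] at h1
end
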